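/- Let H ⊆ ℝ be a finite set and let (u_n)_{n ≥ 0} be a sequence taking values in H, with u₀ = 0, not constant. For j, j' ∈ H, let N_{jj'}(N) be the number of indices 0 ≤ i < N with u_i = j and u_{i+1} = j', and assume that for every pair (j,j') the frequency F_{jj'} := lim_{N→∞} N_{jj'}(N)/N exists. For each N let ℐ(Γ_N) = 2ℓ(Γ_N)/δ(Γ_N) be the inconstancy of the polygonal curve Γ_N through (0,u₀), …, (N,u_N). Then ℐ(Γ_N) converges as N → ∞ and ℐ((u_n)) = Σ_{j∈H} F_{jj} + Σ_{j,j'∈H, j<j'} √(1 + (j'−j)²)(F_{jj'} + F_{j'j}) = 1 + Σ_{j,j'∈H, j<j'} (√(1 + (j'−j)²) − 1)(F_{jj'} + F_{j'j}). -/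

import Mathlib

/-!
The length is a sum over steps, so grouping the steps by block gives
`ℓ(Γ_N)/N → Σ_{j,j'} √(1+(j'−j)²) F_{jj'}`, and the frequencies `F_{jj'}` sum to `1`.
The perimeter `δ(Γ_N)` of the hull `K_N` is `2N + O(1)`. From above, `K_N` lies in the rectangle
`[0,N] × [−B,B]` and perimeters of convex bodies are monotone under inclusion. From below, once
some vertex `(a,u_a)` is off the chord from `(0,0)` to `(N,u_N)`, every vertical line over `(0,N)`
meets `K_N` in a nondegenerate segment, so the graphs of the upper and lower envelopes of `K_N`
are two disjoint parts of its frontier, each of length at least that of its shadow on the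
`x`-axis. Hence `ℐ(Γ_N) = 2(ℓ/N)/(δ/N)` has the limit `Σ_{j,j'} √(1+(j'−j)²) F_{jj'}`, which is
then split into diagonal and off-diagonal pairs.
-/

noncomputable section
open MeasureTheory Real Set Filter
open scoped ENNReal

/-- The point `(x, y)` of the Euclidean plane. -/
def pt (x y : ℝ) : EuclideanSpace ℝ (Fin 2) := WithLp.toLp 2 ![x, y]

/-- The polygonal curve `Γ_N` through `(0,u₀), (1,u₁), …, (N,u_N)`: the union of the
segments joining `(i, u_i)` to `(i+1, u_{i+1})` for `i = 0, …, N−1`. -/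
def polyCurve (u : ℕ → ℝ) (N : ℕ) : Set (EuclideanSpace ℝ (Fin 2)) :=
  ⋃ i ∈ Finset.range N, segment ℝ (pt i (u i)) (pt (i + 1) (u (i + 1)))

/-- The length `ℓ(Γ_N) = Σ_{i<N} √(1 + (u_{i+1} − u_i)²)` of the polygonal curve. -/
def polyLength (u : ℕ → ℝ) (N : ℕ) : ℝ :=
  ∑ i ∈ Finset.range N, Real.sqrt (1 + (u (i + 1) - u i) ^ 2)

/-- The perimeter `δ(Γ_N)` of the convex hull of the polygonal curve: the
one-dimensional Hausdorff measure of the frontier of the convex hull. -/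
def polyDelta (u : ℕ → ℝ) (N : ℕ) : ℝ :=
  (μH[1] (frontier (convexHull ℝ (polyCurve u N)))).toReal

/-- The inconstancy `ℐ(Γ_N) := 2 ℓ(Γ_N) / δ(Γ_N)` of the polygonal curve. -/
def polyIncon (u : ℕ → ℝ) (N : ℕ) : ℝ :=
  2 * polyLength u N / polyDelta u N

/-- The number of indices `0 ≤ i < N` with `u_i = j` and `u_{i+1} = j'`. -/
def blockCount (u : ℕ → ℝ) (N : ℕ) (j j' : ℝ) : ℕ :=
  ((Finset.range N).filter fun i => u i = j ∧ u (i + 1) = j').card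

local notation "ℝ²" => EuclideanSpace ℝ (Fin 2)

section NearestPoint

variable {F : Type*} [NormedAddCommGroup F] [InnerProductSpace ℝ F] {K R : Set F}

/-- The variational characterisation of the nearest point of a convex `K` to `y`
(`norm_eq_iInf_iff_real_inner_le_zero`). -/
def IsNearestPoint (K : Set F) (y x : F) : Prop :=
  x ∈ K ∧ ∀ w ∈ K, inner ℝ (y - x) (w - x) ≤ 0

theorem IsNearestPoint.dist_le {y₁ y₂ x₁ x₂ : F} (h₁ : IsNearestPoint K y₁ x₁)
    (h₂ : IsNearestPoint K y₂ x₂) : dist x₁ x₂ ≤ dist y₁ y₂ := by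
  have hsq : ‖x₁ - x₂‖ ^ 2 ≤ ‖y₁ - y₂‖ * ‖x₁ - x₂‖ := by
    have e : inner ℝ (y₁ - y₂) (x₁ - x₂) - inner ℝ (x₁ - x₂) (x₁ - x₂)
        = -inner ℝ (y₁ - x₁) (x₂ - x₁) - inner ℝ (y₂ - x₂) (x₁ - x₂) := by
      simp only [inner_sub_left, inner_sub_right, real_inner_comm]; ring
    rw [← real_inner_self_eq_norm_sq]
    linarith [h₁.2 x₂ h₂.1, h₂.2 x₁ h₁.1, real_inner_le_norm (y₁ - y₂) (x₁ - x₂)]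
  rw [dist_eq_norm, dist_eq_norm]
  nlinarith [norm_nonneg (x₁ - x₂), norm_nonneg (y₁ - y₂)]

theorem exists_isNearestPoint (hK : Convex ℝ K) (hKc : IsCompact K) (hne : K.Nonempty) (y : F) :
    ∃ x, IsNearestPoint K y x := by
  obtain ⟨x, hxK, hx⟩ := exists_norm_eq_iInf_of_complete_convex hne hKc.isComplete hK y
  exact ⟨x, hxK, (norm_eq_iInf_iff_real_inner_le_zero hK hxK).1 hx⟩

theorem IsLUB.mem_frontier {α : Type*} [LinearOrder α] [TopologicalSpace α] [OrderTopology α]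
    [DenselyOrdered α] [NoMaxOrder α] {S : Set α} {c : α} (hc : IsLUB S c) (hS : S.Nonempty) :
    c ∈ frontier S := by
  rw [frontier_eq_closure_inter_closure]
  exact ⟨hc.mem_closure hS, mem_closure_of_tendsto (tendsto_id.mono_left (nhdsWithin_le_nhds
    (s := Ioi c))) (eventually_nhdsWithin_of_forall fun t ht hmem => (hc.1 hmem).not_gt ht)⟩

theorem IsGLB.mem_frontier {α : Type*} [LinearOrder α] [TopologicalSpace α] [OrderTopology α]
    [DenselyOrdered α] [NoMinOrder α] {S : Set α} {c : α} (hc : IsGLB S c) (hS : S.Nonempty) :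
    c ∈ frontier S := by
  rw [frontier_eq_closure_inter_closure]
  exact ⟨hc.mem_closure hS, mem_closure_of_tendsto (tendsto_id.mono_left (nhdsWithin_le_nhds
    (s := Iio c))) (eventually_nhdsWithin_of_forall fun t ht hmem => (hc.1 hmem).not_gt ht)⟩

/-- The witness is the point where the outer normal ray of `K` at `x` leaves `R`. -/
theorem exists_mem_frontier_isNearestPoint [CompleteSpace F] (hK : Convex ℝ K)
    (hKc : IsClosed K) (hKi : (interior K).Nonempty) (hR : Bornology.IsBounded R) (hKR : K ⊆ R)
    {x : F} (hx : x ∈ frontier K) : ∃ y ∈ frontier R, IsNearestPoint K y x := by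
  have hxK : x ∈ K := hKc.frontier_subset hx
  obtain ⟨f, hf0, hfx⟩ := geometric_hahn_banach_of_nonempty_interior_point hK hx.2 hKi
  set v := (InnerProductSpace.toDual ℝ F).symm f
  have hv : ∀ w, inner ℝ v w = f w := fun w => InnerProductSpace.toDual_symm_apply
  have hv0 : x ≠ x + v := by
    intro h
    refine hf0 (ContinuousLinearMap.ext fun w => ?_)
    rw [← hv, show v = 0 by simpa using h, inner_zero_left, zero_apply]
  set ray := AffineMap.lineMap (k := ℝ) x (x + v)
  have hray : ∀ t : ℝ, ray t = x + t • v := fun t => by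
    simp [ray, AffineMap.lineMap_apply, add_comm]
  have h0 : (0 : ℝ) ∈ ray ⁻¹' R := by simpa [hray] using hKR hxK
  have hT : IsLUB (ray ⁻¹' R) (sSup (ray ⁻¹' R)) :=
    isLUB_csSup ⟨0, h0⟩ ((antilipschitzWith_lineMap hv0).isBounded_preimage hR).bddAbove
  refine ⟨ray (sSup (ray ⁻¹' R)), AffineMap.lineMap_continuous.frontier_preimage_subset R
    (hT.mem_frontier ⟨0, h0⟩), hxK, fun w hw => ?_⟩
  rw [hray, add_sub_cancel_left, real_inner_smul_left, inner_sub_right, hv, hv]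
  exact mul_nonpos_of_nonneg_of_nonpos (hT.1 h0) (by linarith [hfx w hw])

/-- The nearest-point map onto `K` is `1`-Lipschitz and maps `frontier R` onto `frontier K`. -/
theorem hausdorffMeasure_frontier_le_of_subset [CompleteSpace F] [MeasurableSpace F]
    [BorelSpace F] (hK : Convex ℝ K) (hKc : IsCompact K) (hKi : (interior K).Nonempty)
    (hR : Bornology.IsBounded R) (hKR : K ⊆ R) {d : ℝ} (hd : 0 ≤ d) :
    μH[d] (frontier K) ≤ μH[d] (frontier R) := by
  choose P hP using exists_isNearestPoint hK hKc (hKi.mono interior_subset)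
  have hP1 : LipschitzWith 1 P :=
    LipschitzWith.of_dist_le_mul fun y₁ y₂ => by simpa using (hP y₁).dist_le (hP y₂)
  have hsub : frontier K ⊆ P '' frontier R := by
    intro x hx
    obtain ⟨y, hyR, hy⟩ := exists_mem_frontier_isNearestPoint hK hKc.isClosed hKi hR hKR hx
    exact ⟨y, hyR, dist_le_zero.1 (by simpa using (hP y).dist_le hy)⟩
  calc μH[d] (frontier K) ≤ μH[d] (P '' frontier R) := measure_mono hsub
    _ ≤ μH[d] (frontier R) := by simpa using hP1.hausdorffMeasure_image_le hd (frontier R)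

end NearestPoint

section Plane

@[simp] theorem pt_apply_zero (x y : ℝ) : pt x y 0 = x := rfl
@[simp] theorem pt_apply_one (x y : ℝ) : pt x y 1 = y := rfl

theorem smul_pt_add_smul_pt (a b x y x' y' : ℝ) :
    a • pt x y + b • pt x' y' = pt (a * x + b * x') (a * y + b * y') := by
  ext i; fin_cases i <;> simp

def ptEquiv : (ℝ × ℝ) ≃L[ℝ] ℝ² :=
  ((EuclideanSpace.equiv (Fin 2) ℝ).trans (ContinuousLinearEquiv.finTwoArrow ℝ ℝ)).symm

@[simp] theorem ptEquiv_apply (p : ℝ × ℝ) : ptEquiv p = pt p.1 p.2 := by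
  ext i; fin_cases i <;> rfl

theorem isometry_pt_left (y : ℝ) : Isometry fun x => pt x y :=
  Isometry.of_dist_eq fun x x' => by
    simp [EuclideanSpace.dist_eq, Fin.sum_univ_two, Real.dist_eq, Real.sqrt_sq_eq_abs]

theorem isometry_pt (x : ℝ) : Isometry (pt x) :=
  Isometry.of_dist_eq fun y y' => by
    simp [EuclideanSpace.dist_eq, Fin.sum_univ_two, Real.dist_eq, Real.sqrt_sq_eq_abs]

theorem lipschitzWith_apply_zero : LipschitzWith 1 fun p : ℝ² => p 0 :=
  LipschitzWith.of_edist_le fun p q => PiLp.edist_apply_le p q 0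

theorem volume_le_hausdorffMeasure_graph (φ : ℝ → ℝ) (s : Set ℝ) :
    volume s ≤ μH[1] ((fun x => pt x (φ x)) '' s) := by
  have h := lipschitzWith_apply_zero.hausdorffMeasure_image_le zero_le_one
    ((fun x => pt x (φ x)) '' s)
  rw [image_image, ENNReal.coe_one, ENNReal.one_rpow, one_mul, hausdorffMeasure_real] at h
  simpa only [pt_apply_zero, image_id'] using h

def rect (a b c d : ℝ) : Set ℝ² := ptEquiv '' (Icc a b ×ˢ Icc c d)

theorem isCompact_rect (a b c d : ℝ) : IsCompact (rect a b c d) :=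
  (isCompact_Icc.prod isCompact_Icc).image ptEquiv.continuous

theorem convex_rect (a b c d : ℝ) : Convex ℝ (rect a b c d) :=
  ((convex_Icc a b).prod (convex_Icc c d)).linear_image ptEquiv.toLinearMap

theorem pt_mem_rect {a b c d x y : ℝ} (hx : x ∈ Icc a b) (hy : y ∈ Icc c d) :
    pt x y ∈ rect a b c d :=
  ⟨(x, y), ⟨hx, hy⟩, ptEquiv_apply _⟩

theorem hausdorffMeasure_frontier_rect_le {a b c d : ℝ} (hab : a ≤ b) (hcd : c ≤ d) :
    μH[1] (frontier (rect a b c d)) ≤ ENNReal.ofReal (2 * (b - a) + 2 * (d - c)) := by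
  have hfr : frontier (rect a b c d)
      = (fun x => pt x c) '' Icc a b ∪ (fun x => pt x d) '' Icc a b
        ∪ (pt a '' Icc c d ∪ pt b '' Icc c d) := by
    rw [rect, ← ptEquiv.coe_toHomeomorph, ← Homeomorph.image_frontier, frontier_prod_eq,
      closure_Icc, closure_Icc, frontier_Icc hab, frontier_Icc hcd]
    simp [prod_insert, insert_prod, image_union, image_image]
  have hh : ∀ y, μH[1] ((fun x => pt x y) '' Icc a b) = ENNReal.ofReal (b - a) := fun y => by
    rw [(isometry_pt_left y).hausdorffMeasure_image (Or.inl zero_le_one), hausdorffMeasure_real,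
      Real.volume_Icc]
  have hv : ∀ x, μH[1] (pt x '' Icc c d) = ENNReal.ofReal (d - c) := fun x => by
    rw [(isometry_pt x).hausdorffMeasure_image (Or.inl zero_le_one), hausdorffMeasure_real,
      Real.volume_Icc]
  have hba : 0 ≤ b - a := sub_nonneg.2 hab
  have hdc : 0 ≤ d - c := sub_nonneg.2 hcd
  calc μH[1] (frontier (rect a b c d))
      ≤ μH[1] ((fun x => pt x c) '' Icc a b) + μH[1] ((fun x => pt x d) '' Icc a b)
        + (μH[1] (pt a '' Icc c d) + μH[1] (pt b '' Icc c d)) := by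
        rw [hfr]
        exact (measure_union_le _ _).trans
          (add_le_add (measure_union_le _ _) (measure_union_le _ _))
    _ = ENNReal.ofReal (2 * (b - a) + 2 * (d - c)) := by
        rw [hh, hh, hv, hv, ENNReal.ofReal_add (by positivity) (by positivity), two_mul, two_mul,
          ENNReal.ofReal_add hba hba, ENNReal.ofReal_add hdc hdc]

end Plane

section Envelope

variable {K : Set ℝ²}

def upperEnvelope (K : Set ℝ²) (x : ℝ) : ℝ := sSup (pt x ⁻¹' K)

def lowerEnvelope (K : Set ℝ²) (x : ℝ) : ℝ := sInf (pt x ⁻¹' K)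

theorem IsCompact.preimage_pt (hKc : IsCompact K) (x : ℝ) : IsCompact (pt x ⁻¹' K) :=
  (isometry_pt x).isClosedEmbedding.isCompact_preimage hKc

theorem isLUB_upperEnvelope (hKc : IsCompact K) {x : ℝ} (hx : (pt x ⁻¹' K).Nonempty) :
    IsLUB (pt x ⁻¹' K) (upperEnvelope K x) :=
  isLUB_csSup hx (hKc.preimage_pt x).bddAbove

theorem isGLB_lowerEnvelope (hKc : IsCompact K) {x : ℝ} (hx : (pt x ⁻¹' K).Nonempty) :
    IsGLB (pt x ⁻¹' K) (lowerEnvelope K x) :=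
  isGLB_csInf hx (hKc.preimage_pt x).bddBelow

theorem pt_upperEnvelope_mem (hKc : IsCompact K) {x : ℝ} (hx : (pt x ⁻¹' K).Nonempty) :
    pt x (upperEnvelope K x) ∈ K :=
  (hKc.preimage_pt x).sSup_mem hx

theorem pt_lowerEnvelope_mem (hKc : IsCompact K) {x : ℝ} (hx : (pt x ⁻¹' K).Nonempty) :
    pt x (lowerEnvelope K x) ∈ K :=
  (hKc.preimage_pt x).sInf_mem hx

theorem pt_upperEnvelope_mem_frontier (hKc : IsCompact K) {x : ℝ}
    (hx : (pt x ⁻¹' K).Nonempty) : pt x (upperEnvelope K x) ∈ frontier K :=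
  (isometry_pt x).continuous.frontier_preimage_subset K
    ((isLUB_upperEnvelope hKc hx).mem_frontier hx)

theorem pt_lowerEnvelope_mem_frontier (hKc : IsCompact K) {x : ℝ}
    (hx : (pt x ⁻¹' K).Nonempty) : pt x (lowerEnvelope K x) ∈ frontier K :=
  (isometry_pt x).continuous.frontier_preimage_subset K
    ((isGLB_lowerEnvelope hKc hx).mem_frontier hx)

theorem concaveOn_upperEnvelope (hK : Convex ℝ K) (hKc : IsCompact K) {s : Set ℝ}
    (hs : Convex ℝ s) (hne : ∀ x ∈ s, (pt x ⁻¹' K).Nonempty) :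
    ConcaveOn ℝ s (upperEnvelope K) := by
  refine ⟨hs, fun x hx x' hx' a b ha hb hab =>
    (isLUB_upperEnvelope hKc (hne _ (hs hx hx' ha hb hab))).1 ?_⟩
  have h := hK (pt_upperEnvelope_mem hKc (hne x hx)) (pt_upperEnvelope_mem hKc (hne x' hx'))
    ha hb hab
  rwa [smul_pt_add_smul_pt] at h

theorem convexOn_lowerEnvelope (hK : Convex ℝ K) (hKc : IsCompact K) {s : Set ℝ}
    (hs : Convex ℝ s) (hne : ∀ x ∈ s, (pt x ⁻¹' K).Nonempty) :
    ConvexOn ℝ s (lowerEnvelope K) := by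
  refine ⟨hs, fun x hx x' hx' a b ha hb hab =>
    (isGLB_lowerEnvelope hKc (hne _ (hs hx hx' ha hb hab))).1 ?_⟩
  have h := hK (pt_lowerEnvelope_mem hKc (hne x hx)) (pt_lowerEnvelope_mem hKc (hne x' hx'))
    ha hb hab
  rwa [smul_pt_add_smul_pt] at h

theorem lowerEnvelope_lt_upperEnvelope (hKc : IsCompact K) {x y y' : ℝ} (hy : pt x y ∈ K)
    (hy' : pt x y' ∈ K) (hyy' : y ≠ y') : lowerEnvelope K x < upperEnvelope K x := by
  have hlow := (isGLB_lowerEnvelope hKc ⟨y, hy⟩).1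
  have hup := (isLUB_upperEnvelope hKc ⟨y, hy⟩).1
  rcases hyy'.lt_or_gt with h | h
  · exact ((hlow hy).trans_lt h).trans_le (hup hy')
  · exact ((hlow hy').trans_lt h).trans_le (hup hy)

theorem ContinuousOn.pt_graph {φ : ℝ → ℝ} {s : Set ℝ} (hφ : ContinuousOn φ s) :
    ContinuousOn (fun x => pt x (φ x)) s :=
  (ptEquiv.continuous.comp_continuousOn (continuousOn_id.prodMk hφ)).congr fun x _ =>
    (ptEquiv_apply (x, φ x)).symm

/-- `frontier K` contains the graphs of both envelopes over `I`, which are disjoint and each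
project onto `I`. -/
theorem two_mul_volume_le_hausdorffMeasure_frontier (hK : Convex ℝ K) (hKc : IsCompact K)
    {a b : ℝ} (hchord : ∀ x ∈ Ioo a b, ∃ y y', y ≠ y' ∧ pt x y ∈ K ∧ pt x y' ∈ K)
    {I : Set ℝ} (hI : IsCompact I) (hIab : I ⊆ Ioo a b) :
    2 * volume I ≤ μH[1] (frontier K) := by
  have hne : ∀ x ∈ Ioo a b, (pt x ⁻¹' K).Nonempty := fun x hx => by
    obtain ⟨y, -, -, hy, -⟩ := hchord x hx
    exact ⟨y, hy⟩
  have hup := ((concaveOn_upperEnvelope hK hKc (convex_Ioo a b) hne).continuousOn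
    isOpen_Ioo).pt_graph.mono hIab
  have hlow := ((convexOn_lowerEnvelope hK hKc (convex_Ioo a b) hne).continuousOn
    isOpen_Ioo).pt_graph.mono hIab
  set U := (fun x => pt x (upperEnvelope K x)) '' I
  set V := (fun x => pt x (lowerEnvelope K x)) '' I
  have hUV : Disjoint U V := by
    refine disjoint_left.2 ?_
    rintro _ ⟨x, hx, rfl⟩ ⟨x', -, h⟩
    obtain rfl : x' = x := by simpa using congrArg (· 0) h
    replace h : lowerEnvelope K x' = upperEnvelope K x' := by simpa using congrArg (· 1) h
    obtain ⟨y, y', hyy', hy, hy'⟩ := hchord x' (hIab hx)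
    exact (lowerEnvelope_lt_upperEnvelope hKc hy hy' hyy').ne h
  have hUV_sub : U ∪ V ⊆ frontier K := union_subset
    (image_subset_iff.2 fun x hx => pt_upperEnvelope_mem_frontier hKc (hne x (hIab hx)))
    (image_subset_iff.2 fun x hx => pt_lowerEnvelope_mem_frontier hKc (hne x (hIab hx)))
  calc 2 * volume I = volume I + volume I := two_mul _
    _ ≤ μH[1] U + μH[1] V :=
      add_le_add (volume_le_hausdorffMeasure_graph _ I) (volume_le_hausdorffMeasure_graph _ I)
    _ = μH[1] (U ∪ V) := (measure_union hUV (hI.image_of_continuousOn hlow).measurableSet).symm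
    _ ≤ μH[1] (frontier K) := measure_mono hUV_sub

theorem ofReal_two_mul_le_hausdorffMeasure_frontier (hK : Convex ℝ K) (hKc : IsCompact K)
    {a b : ℝ} (hchord : ∀ x ∈ Ioo a b, ∃ y y', y ≠ y' ∧ pt x y ∈ K ∧ pt x y' ∈ K) :
    ENNReal.ofReal (2 * (b - a)) ≤ μH[1] (frontier K) := by
  rw [ENNReal.ofReal_mul zero_le_two, ENNReal.ofReal_ofNat, ← Real.volume_Ioo,
    isOpen_Ioo.measure_eq_iSup_isCompact]
  simp only [ENNReal.mul_iSup]
  exact iSup₂_le fun I hIab => iSup_le fun hI =>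
    two_mul_volume_le_hausdorffMeasure_frontier hK hKc hchord hI hIab

end Envelope

section Polygon

variable {K : Set ℝ²}

theorem exists_vertical_chord_of_combo (hK : Convex ℝ K) {e z x₀ y₀ y₁ : ℝ} (he : pt e z ∈ K)
    (h₀ : pt x₀ y₀ ∈ K) (h₁ : pt x₀ y₁ ∈ K) (hy : y₀ ≠ y₁) {s t : ℝ} (hs : 0 ≤ s) (ht : 0 < t)
    (hst : s + t = 1) :
    ∃ y y', y ≠ y' ∧ pt (s * e + t * x₀) y ∈ K ∧ pt (s * e + t * x₀) y' ∈ K :=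
  ⟨s * z + t * y₀, s * z + t * y₁, fun h => hy (mul_left_cancel₀ ht.ne' (add_left_cancel h)),
    smul_pt_add_smul_pt s t e z x₀ y₀ ▸ hK he h₀ hs ht.le hst,
    smul_pt_add_smul_pt s t e z x₀ y₁ ▸ hK he h₁ hs ht.le hst⟩

theorem exists_vertical_chord (hK : Convex ℝ K) {a b x₀ ya yb y₀ y₁ : ℝ} (ha : pt a ya ∈ K)
    (hb : pt b yb ∈ K) (h₀ : pt x₀ y₀ ∈ K) (h₁ : pt x₀ y₁ ∈ K) (hy : y₀ ≠ y₁) (hax : a < x₀)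
    (hxb : x₀ < b) : ∀ x ∈ Ioo a b, ∃ y y', y ≠ y' ∧ pt x y ∈ K ∧ pt x y' ∈ K := by
  intro x hx
  rcases le_total x x₀ with h | h
  · have hd : 0 < x₀ - a := sub_pos.2 hax
    have key := exists_vertical_chord_of_combo hK ha h₀ h₁ hy (s := (x₀ - x) / (x₀ - a))
      (t := (x - a) / (x₀ - a)) (div_nonneg (by linarith) hd.le)
      (div_pos (by linarith [hx.1]) hd) (by field_simp; ring)
    rwa [show (x₀ - x) / (x₀ - a) * a + (x - a) / (x₀ - a) * x₀ = x by field_simp; ring] at key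
  · have hd : 0 < b - x₀ := sub_pos.2 hxb
    have key := exists_vertical_chord_of_combo hK hb h₀ h₁ hy (s := (x - x₀) / (b - x₀))
      (t := (b - x) / (b - x₀)) (div_nonneg (by linarith) hd.le)
      (div_pos (by linarith [hx.2]) hd) (by field_simp; ring)
    rwa [show (x - x₀) / (b - x₀) * b + (b - x) / (b - x₀) * x₀ = x by field_simp; ring] at key

theorem interior_nonempty_of_mem (hK : Convex ℝ K) {a ya x₀ y₀ y₁ : ℝ} (ha : pt a ya ∈ K)
    (h₀ : pt x₀ y₀ ∈ K) (h₁ : pt x₀ y₁ ∈ K) (hax : a ≠ x₀) (hy : y₀ ≠ y₁) :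
    (interior K).Nonempty := by
  rw [hK.interior_nonempty_iff_affineSpan_eq_top,
    ← AffineSubspace.direction_eq_top_iff_of_nonempty ⟨_, subset_affineSpan ℝ K ha⟩,
    Submodule.eq_top_iff']
  intro p
  have hv := AffineSubspace.vsub_mem_direction (subset_affineSpan ℝ K h₁) (subset_affineSpan ℝ K h₀)
  have hw := AffineSubspace.vsub_mem_direction (subset_affineSpan ℝ K h₀) (subset_affineSpan ℝ K ha)
  have hxa : x₀ - a ≠ 0 := sub_ne_zero.2 hax.symm
  have hyy : y₁ - y₀ ≠ 0 := sub_ne_zero.2 hy.symm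
  have hp : p = (p 0 / (x₀ - a)) • (pt x₀ y₀ -ᵥ pt a ya)
      + ((p 1 - p 0 / (x₀ - a) * (y₀ - ya)) / (y₁ - y₀)) • (pt x₀ y₁ -ᵥ pt x₀ y₀) := by
    ext i; fin_cases i
    · simp; field_simp
    · simp; field_simp; ring
  rw [hp]
  exact add_mem (Submodule.smul_mem _ _ hw) (Submodule.smul_mem _ _ hv)

theorem pt_mem_polyCurve (u : ℕ → ℝ) {N i : ℕ} (hN : 0 < N) (hi : i ≤ N) :
    pt i (u i) ∈ polyCurve u N := by
  rcases hi.lt_or_eq with hi | rfl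
  · exact mem_iUnion₂.2 ⟨i, Finset.mem_range.2 hi, left_mem_segment ℝ _ _⟩
  · obtain ⟨k, rfl⟩ := Nat.exists_eq_add_of_lt hN
    refine mem_iUnion₂.2 ⟨k, Finset.mem_range.2 (by omega), ?_⟩
    simpa using right_mem_segment ℝ (pt k (u k)) (pt (k + 1) (u (k + 1)))

theorem convexHull_polyCurve (u : ℕ → ℝ) {N : ℕ} (hN : 0 < N) :
    convexHull ℝ (polyCurve u N) = convexHull ℝ ((fun i : ℕ => pt i (u i)) '' Iic N) := by
  refine (convexHull_min ?_ (convex_convexHull ℝ _)).antisymm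
    (convexHull_mono (image_subset_iff.2 fun i hi => pt_mem_polyCurve u hN hi))
  refine iUnion₂_subset fun i hi => segment_subset_convexHull ⟨i, ?_, rfl⟩ ⟨i + 1, ?_, ?_⟩
  · exact mem_Iic.2 (Finset.mem_range.1 hi).le
  · exact mem_Iic.2 (Finset.mem_range.1 hi)
  · simp

theorem polyDelta_bounds {u : ℕ → ℝ} (hu0 : u 0 = 0) {B : ℝ} (hB : ∀ n, |u n| ≤ B) {a N : ℕ}
    (haN : a < N) (hoff : (a : ℝ) / N * u N ≠ u a) :
    2 * N ≤ polyDelta u N ∧ polyDelta u N ≤ 2 * N + 4 * B := by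
  have hN : 0 < N := a.zero_le.trans_lt haN
  have hNR : (0 : ℝ) < N := Nat.cast_pos.2 hN
  have ha : (0 : ℝ) < a := Nat.cast_pos.2 (Nat.pos_of_ne_zero (by rintro rfl; simp [hu0] at hoff))
  have haN' : (a : ℝ) < N := Nat.cast_lt.2 haN
  set K := convexHull ℝ ((fun i : ℕ => pt i (u i)) '' Iic N)
  have hK : Convex ℝ K := convex_convexHull ℝ _
  have hKc : IsCompact K := ((finite_Iic N).image _).isCompact_convexHull ℝ
  have hvert : ∀ i ≤ N, pt i (u i) ∈ K := fun i hi => subset_convexHull ℝ _ ⟨i, hi, rfl⟩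
  have h0 : pt 0 0 ∈ K := by simpa [hu0] using hvert 0 N.zero_le
  have hchordK : pt a (a / N * u N) ∈ K := by
    have h := hK h0 (hvert N le_rfl) (sub_nonneg.2 ((div_le_one hNR).2 haN'.le))
      (div_nonneg ha.le hNR.le) (sub_add_cancel 1 _)
    simpa only [smul_pt_add_smul_pt, mul_zero, zero_add, div_mul_cancel₀ _ hNR.ne'] using h
  have hint := interior_nonempty_of_mem hK h0 (hvert a haN.le) hchordK ha.ne hoff.symm
  have hKR : K ⊆ rect 0 N (-B) B := convexHull_min
    (image_subset_iff.2 fun i hi => pt_mem_rect ⟨i.cast_nonneg, Nat.cast_le.2 hi⟩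
      (abs_le.1 (hB i))) (convex_rect _ _ _ _)
  have hB0 : 0 ≤ B := (abs_nonneg _).trans (hB 0)
  have hupper : μH[1] (frontier K) ≤ ENNReal.ofReal (2 * N + 4 * B) := by
    refine (hausdorffMeasure_frontier_le_of_subset hK hKc hint (isCompact_rect _ _ _ _).isBounded
      hKR zero_le_one).trans ((hausdorffMeasure_frontier_rect_le hNR.le (by linarith)).trans_eq ?_)
    ring_nf
  have hlower := ofReal_two_mul_le_hausdorffMeasure_frontier hK hKc
    (exists_vertical_chord hK h0 (hvert N le_rfl) (hvert a haN.le) hchordK hoff.symm ha haN')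
  rw [sub_zero] at hlower
  rw [polyDelta, convexHull_polyCurve u hN]
  exact ⟨(ENNReal.ofReal_le_iff_le_toReal (ne_top_of_le_ne_top ENNReal.ofReal_ne_top hupper)).1
    hlower, ENNReal.toReal_le_of_le_ofReal (by positivity) hupper⟩

theorem tendsto_polyDelta_div {u : ℕ → ℝ} (hu0 : u 0 = 0) {B : ℝ} (hB : ∀ n, |u n| ≤ B)
    (hne : ∃ n, u n ≠ 0) : Tendsto (fun N : ℕ => polyDelta u N / N) atTop (nhds 2) := by
  obtain ⟨a, ha⟩ := hne
  have hchord0 : Tendsto (fun N : ℕ => (a : ℝ) / N * u N) atTop (nhds 0) := by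
    refine squeeze_zero_norm (fun N => ?_) (tendsto_const_div_atTop_nhds_zero_nat (a * B))
    calc ‖(a : ℝ) / N * u N‖ = a / N * |u N| := by
          rw [norm_mul, Real.norm_of_nonneg (by positivity), Real.norm_eq_abs]
      _ ≤ a / N * B := by gcongr; exact hB N
      _ = a * B / N := by ring
  have hbounds : ∀ᶠ N : ℕ in atTop,
      2 * (N : ℝ) ≤ polyDelta u N ∧ polyDelta u N ≤ 2 * N + 4 * B :=
    ((eventually_gt_atTop a).and (hchord0.eventually_ne ha.symm)).mono fun N hN =>
      polyDelta_bounds hu0 hB hN.1 hN.2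
  have hpos : ∀ᶠ N : ℕ in atTop, (0 : ℝ) < N :=
    (eventually_gt_atTop 0).mono fun N h => Nat.cast_pos.2 h
  refine tendsto_of_tendsto_of_tendsto_of_le_of_le' tendsto_const_nhds
    (h := fun N : ℕ => 2 + 4 * B / N)
    (by simpa using (tendsto_const_div_atTop_nhds_zero_nat (4 * B)).const_add 2) ?_ ?_
  · filter_upwards [hbounds, hpos] with N h hN
    rw [le_div_iff₀ hN]
    exact h.1
  · filter_upwards [hbounds, hpos] with N h hN
    rw [div_le_iff₀ hN, add_mul, div_mul_cancel₀ _ hN.ne']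
    exact h.2

end Polygon

theorem tendsto_polyIncon {u : ℕ → ℝ} (hu0 : u 0 = 0) {B : ℝ} (hB : ∀ n, |u n| ≤ B)
    (hne : ∃ n, u n ≠ 0) {L : ℝ} (hL : Tendsto (fun N : ℕ => polyLength u N / N) atTop (nhds L)) :
    Tendsto (fun N : ℕ => polyIncon u N) atTop (nhds L) := by
  have h := (hL.const_mul 2).div (tendsto_polyDelta_div hu0 hB hne) two_ne_zero
  rw [mul_div_cancel_left₀ L two_ne_zero] at h
  refine h.congr' ((eventually_ne_atTop 0).mono fun N hN => ?_)
  change 2 * (polyLength u N / N) / (polyDelta u N / N) = polyIncon u N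
  rw [← mul_div_assoc, div_div_div_cancel_right₀ (Nat.cast_ne_zero.2 hN), polyIncon]

theorem Finset.sum_sum_eq_sum_diag_add_sum_lt {α M : Type*} [LinearOrder α] [AddCommMonoid M]
    (s : Finset α) (f : α → α → M) :
    ∑ i ∈ s, ∑ j ∈ s, f i j
      = ∑ i ∈ s, f i i + ∑ i ∈ s, ∑ j ∈ s.filter (fun j => i < j), (f i j + f j i) := by
  have hsplit : ∀ i j, f i j = (if i = j then f i j else 0)
      + ((if i < j then f i j else 0) + if j < i then f i j else 0) := by
    intro i j
    rcases lt_trichotomy i j with h | rfl | h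
    · simp [h, h.ne, h.not_gt]
    · simp
    · simp [h, h.ne', h.not_gt]
  have hswap : ∑ i ∈ s, ∑ j ∈ s, (if j < i then f i j else 0)
      = ∑ i ∈ s, ∑ j ∈ s, (if i < j then f j i else 0) := Finset.sum_comm
  rw [Finset.sum_congr rfl fun i _ => Finset.sum_congr rfl fun j _ => hsplit i j]
  simp only [Finset.sum_add_distrib, Finset.sum_ite_eq, hswap, Finset.sum_filter]
  exact congrArg (· + _) (Finset.sum_congr rfl fun i hi => if_pos hi)

section BlockFrequencies

variable {u : ℕ → ℝ} (H : Finset ℝ)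

theorem sum_range_eq_sum_blockCount_smul {M : Type*} [AddCommMonoid M] (hvals : ∀ n, u n ∈ H)
    (g : ℝ → ℝ → M) (N : ℕ) :
    ∑ i ∈ Finset.range N, g (u i) (u (i + 1))
      = ∑ j ∈ H, ∑ j' ∈ H, blockCount u N j j' • g j j' := by
  rw [← Finset.sum_fiberwise_of_maps_to (g := fun i => (u i, u (i + 1))) (t := H ×ˢ H)
    fun i _ => Finset.mem_product.2 ⟨hvals i, hvals (i + 1)⟩, Finset.sum_product]
  refine Finset.sum_congr rfl fun j _ => Finset.sum_congr rfl fun j' _ => ?_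
  rw [blockCount, ← Finset.sum_const]
  refine Finset.sum_congr (by simp [Prod.ext_iff]) fun i hi => ?_
  obtain ⟨-, h, h'⟩ := by simpa [Prod.ext_iff] using hi
  rw [h, h']

variable {F : ℝ → ℝ → ℝ}

theorem tendsto_sum_div_of_tendsto_blockCount (hvals : ∀ n, u n ∈ H)
    (hF : ∀ j ∈ H, ∀ j' ∈ H,
      Tendsto (fun N : ℕ => (blockCount u N j j' : ℝ) / N) atTop (nhds (F j j')))
    (g : ℝ → ℝ → ℝ) :
    Tendsto (fun N : ℕ => (∑ i ∈ Finset.range N, g (u i) (u (i + 1))) / N) atTop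
      (nhds (∑ j ∈ H, ∑ j' ∈ H, g j j' * F j j')) := by
  have h : ∀ N : ℕ, (∑ i ∈ Finset.range N, g (u i) (u (i + 1))) / N
      = ∑ j ∈ H, ∑ j' ∈ H, g j j' * ((blockCount u N j j' : ℝ) / N) := fun N => by
    simp only [sum_range_eq_sum_blockCount_smul H hvals, Finset.sum_div, nsmul_eq_mul]
    exact Finset.sum_congr rfl fun j _ => Finset.sum_congr rfl fun j' _ => by ring
  simp only [h]
  exact tendsto_finsetSum _ fun j hj => tendsto_finsetSum _ fun j' hj' =>
    (hF j hj j' hj').const_mul _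

theorem sum_sum_eq_one_of_tendsto_blockCount (hvals : ∀ n, u n ∈ H)
    (hF : ∀ j ∈ H, ∀ j' ∈ H,
      Tendsto (fun N : ℕ => (blockCount u N j j' : ℝ) / N) atTop (nhds (F j j'))) :
    ∑ j ∈ H, ∑ j' ∈ H, F j j' = 1 := by
  have h := tendsto_sum_div_of_tendsto_blockCount H hvals hF fun _ _ => 1
  simp only [Finset.sum_const, Finset.card_range, nsmul_eq_mul, mul_one, one_mul] at h
  exact tendsto_nhds_unique h (tendsto_const_nhds.congr'
    ((eventually_ne_atTop 0).mono fun N hN => (div_self (Nat.cast_ne_zero.2 hN)).symm))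

end BlockFrequencies

/-- Inconstancy of a non-constant sequence taking finitely many values (in a finite set
`H ⊆ ℝ`) with `u₀ = 0`, all of whose length-2 block frequencies `F_{jj'}` exist: the
inconstancy `lim_N ℐ(Γ_N)` exists and equals
`Σ_{j∈H} F_{jj} + Σ_{j<j'} √(1+(j'−j)²)(F_{jj'} + F_{j'j})
  = 1 + Σ_{j<j'} (√(1+(j'−j)²) − 1)(F_{jj'} + F_{j'j})`. -/
theorem polyIncon_finite_values_infinite
    (H : Finset ℝ) (u : ℕ → ℝ) (hvals : ∀ n, u n ∈ H)
    (hu0 : u 0 = 0) (hne : ∃ n, u n ≠ u 0)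
    (F : ℝ → ℝ → ℝ)
    (hF : ∀ j ∈ H, ∀ j' ∈ H,
      Tendsto (fun N : ℕ => (blockCount u N j j' : ℝ) / N) atTop (nhds (F j j'))) :
    Tendsto (fun N : ℕ => polyIncon u N) atTop
      (nhds (∑ j ∈ H, F j j
        + ∑ j ∈ H, ∑ j' ∈ H.filter (fun j' => j < j'),
            Real.sqrt (1 + (j' - j) ^ 2) * (F j j' + F j' j))) ∧
    ∑ j ∈ H, F j j
        + ∑ j ∈ H, ∑ j' ∈ H.filter (fun j' => j < j'),
            Real.sqrt (1 + (j' - j) ^ 2) * (F j j' + F j' j)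
      = 1 + ∑ j ∈ H, ∑ j' ∈ H.filter (fun j' => j < j'),
            (Real.sqrt (1 + (j' - j) ^ 2) - 1) * (F j j' + F j' j) := by
  have hB : ∀ n, |u n| ≤ ∑ j ∈ H, |j| := fun n =>
    Finset.single_le_sum (fun j _ => abs_nonneg j) (hvals n)
  have hlim := tendsto_polyIncon hu0 hB (hu0 ▸ hne)
    (tendsto_sum_div_of_tendsto_blockCount H hvals hF fun j j' => √(1 + (j' - j) ^ 2))
  have hone := sum_sum_eq_one_of_tendsto_blockCount H hvals hF
  rw [Finset.sum_sum_eq_sum_diag_add_sum_lt (M := ℝ)] at hlim hone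
  refine ⟨?_, ?_⟩
  · convert hlim using 3
    · simp
    · refine Finset.sum_congr rfl fun j _ => Finset.sum_congr rfl fun j' _ => ?_
      rw [show (j - j') ^ 2 = (j' - j) ^ 2 by ring, mul_add]
  · have hsplit : ∑ j ∈ H, ∑ j' ∈ H.filter (fun j' => j < j'),
          √(1 + (j' - j) ^ 2) * (F j j' + F j' j)
        = ∑ j ∈ H, ∑ j' ∈ H.filter (fun j' => j < j'), (F j j' + F j' j)
          + ∑ j ∈ H, ∑ j' ∈ H.filter (fun j' => j < j'),
              (√(1 + (j' - j) ^ 2) - 1) * (F j j' + F j' j) := by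
      rw [← Finset.sum_add_distrib]
      refine Finset.sum_congr rfl fun j _ => ?_
      rw [← Finset.sum_add_distrib]
      exact Finset.sum_congr rfl fun j' _ => by ring
    linear_combination hsplit + hone
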